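/- Completely K-preserving maps are closed under composition: for all types a, b, c ∈ Ty, if M ∈ K(a → b) and N ∈ K(b → c), then the composite N ∘ M belongs to K(a → c). -/

import Mathlib

inductive Ty (Λ : Type) : Type
  | elem : List Λ → Ty Λ
  | arrow : Ty Λ → Ty Λ → Ty Λ

namespace Ty

variable {Λ : Type}

def ord : Ty Λ → ℕ
  | elem _ => 0
  | arrow a b => 1 + max a.ord b.ord

def par : Ty Λ → Ty Λ → Ty Λ
  | elem v, elem w => elem (v ++ w)
  | elem v, arrow c d => arrow c (par (elem v) d)
  | arrow a b, elem w => arrow a (par b (elem w))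
  | arrow a b, arrow c d =>
    if (arrow a b).ord < (arrow c d).ord then arrow c (par (arrow a b) d)
    else if (arrow a b).ord = (arrow c d).ord then arrow (par a c) (par b d)
    else arrow a (par b (arrow c d))

theorem ord_par (x y : Ty Λ) : (x.par y).ord = max x.ord y.ord := by
  induction x, y using par.induct with
  | case1 v w => simp [par, ord]
  | case2 v c d ih => simp_all [par, ord]
  | case3 a b w ih => simp_all [par, ord]
  | case4 a b c d h ih => rw [par, if_pos h]; simp_all [ord]; omega
  | case5 a b c d h1 h2 ih1 ih2 => rw [par, if_neg h1, if_pos h2]; simp_all [ord]; omega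
  | case6 a b c d h1 h2 ih => rw [par, if_neg h1, if_neg h2]; simp_all [ord]; omega

theorem par_elem_elem (v w : List Λ) : (elem v).par (elem w) = elem (v ++ w) := by
  rw [par]

theorem par_arrow_arrow {a b c d : Ty Λ} (h : (arrow a b).ord = (arrow c d).ord) :
    (arrow a b).par (arrow c d) = arrow (a.par c) (b.par d) := by
  rw [par, if_neg (by omega), if_pos h]

theorem par_lt {x c d : Ty Λ} (h : x.ord < (arrow c d).ord) :
    x.par (arrow c d) = arrow c (x.par d) := by
  cases x with
  | elem v => rw [par]
  | arrow a b => rw [par, if_pos h]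

theorem par_gt {a b y : Ty Λ} (h : y.ord < (arrow a b).ord) :
    (arrow a b).par y = arrow a (b.par y) := by
  cases y with
  | elem w => rw [par]
  | arrow c d => rw [par, if_neg (by omega), if_neg (by omega)]

end Ty
namespace HigherOrder

open scoped TensorProduct ComplexOrder

variable {Λ : Type} (dm : Λ → ℕ)

def dimw (w : List Λ) : ℕ := (w.map dm).prod

theorem dimw_append (v w : List Λ) : dimw dm (v ++ w) = dimw dm v * dimw dm w := by
  simp [dimw]

noncomputable def L : Ty Λ → ModuleCat ℂ
  | .elem w => ModuleCat.of ℂ (Matrix (Fin (dimw dm w)) (Fin (dimw dm w)) ℂ)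
  | .arrow a b => ModuleCat.of ℂ (↑(L a) →ₗ[ℂ] ↑(L b))

def toHom {a b : Ty Λ} (M : ↑(L dm (Ty.arrow a b))) : ↑(L dm a) →ₗ[ℂ] ↑(L dm b) := M

def ofHom {a b : Ty Λ} (f : ↑(L dm a) →ₗ[ℂ] ↑(L dm b)) : ↑(L dm (Ty.arrow a b)) := f

def toMat {w : List Λ} (A : ↑(L dm (Ty.elem w))) :
    Matrix (Fin (dimw dm w)) (Fin (dimw dm w)) ℂ := A

def ofMat {w : List Λ} (A : Matrix (Fin (dimw dm w)) (Fin (dimw dm w)) ℂ) :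
    ↑(L dm (Ty.elem w)) := A

noncomputable def app {a b : Ty Λ} (M : ↑(L dm (Ty.arrow a b))) (ρ : ↑(L dm a)) : ↑(L dm b) :=
  toHom dm M ρ

instance instFinDimL (x : Ty Λ) : FiniteDimensional ℂ ↑(L dm x) := by
  induction x with
  | elem w => exact inferInstanceAs (FiniteDimensional ℂ (Matrix _ _ ℂ))
  | arrow a b iha ihb => exact inferInstanceAs (FiniteDimensional ℂ (↑(L dm a) →ₗ[ℂ] ↑(L dm b)))

noncomputable def castL {x y : Ty Λ} (h : x = y) : ↑(L dm x) ≃ₗ[ℂ] ↑(L dm y) :=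
  h ▸ LinearEquiv.refl ℂ ↑(L dm x)

/-- `L (arrow a b)` is (by definition) a space of linear maps. -/
noncomputable def homEquivL (a b : Ty Λ) :
    ↑(L dm (Ty.arrow a b)) ≃ₗ[ℂ] (↑(L dm a) →ₗ[ℂ] ↑(L dm b)) :=
  { toFun := toHom dm, invFun := ofHom dm, map_add' := fun _ _ => rfl,
    map_smul' := fun _ _ => rfl, left_inv := fun _ => rfl, right_inv := fun _ => rfl }

/-- `L (elem w)` is (by definition) a space of matrices. -/
noncomputable def matEquivL (w : List Λ) :
    ↑(L dm (Ty.elem w)) ≃ₗ[ℂ] Matrix (Fin (dimw dm w)) (Fin (dimw dm w)) ℂ :=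
  { toFun := toMat dm, invFun := ofMat dm, map_add' := fun _ _ => rfl,
    map_smul' := fun _ _ => rfl, left_inv := fun _ => rfl, right_inv := fun _ => rfl }

/-- The parallel product on the level of spaces: the canonical identification of
`L x ⊗ L y` with `L (x ⊛ y)`. -/
noncomputable def parEquiv : (x y : Ty Λ) →
    (↑(L dm x) ⊗[ℂ] ↑(L dm y)) ≃ₗ[ℂ] ↑(L dm (x.par y))
  | .elem v, .elem w =>
      (TensorProduct.congr (matEquivL dm v) (matEquivL dm w)) ≪≫ₗ
      ((Matrix.stdBasis ℂ (Fin (dimw dm v)) (Fin (dimw dm v))).tensorProduct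
          (Matrix.stdBasis ℂ (Fin (dimw dm w)) (Fin (dimw dm w)))).equiv
        (Matrix.stdBasis ℂ (Fin (dimw dm v) × Fin (dimw dm w))
          (Fin (dimw dm v) × Fin (dimw dm w)))
        (Equiv.prodProdProdComm _ _ _ _) ≪≫ₗ
      Matrix.reindexLinearEquiv ℂ ℂ finProdFinEquiv finProdFinEquiv ≪≫ₗ
      Matrix.reindexLinearEquiv ℂ ℂ (finCongr (dimw_append dm v w).symm)
        (finCongr (dimw_append dm v w).symm) ≪≫ₗ
      (matEquivL dm (v ++ w)).symm ≪≫ₗ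
      castL dm (Ty.par_elem_elem v w).symm
  | .elem v, .arrow c d =>
      (TensorProduct.congr (LinearEquiv.refl ℂ _) (homEquivL dm c d)) ≪≫ₗ
      lTensorHomEquivHomLTensor ℂ ↑(L dm c) ↑(L dm (Ty.elem v)) ↑(L dm d) ≪≫ₗ
      LinearEquiv.arrowCongr (LinearEquiv.refl ℂ _) (parEquiv (Ty.elem v) d) ≪≫ₗ
      (homEquivL dm c ((Ty.elem v).par d)).symm ≪≫ₗ
      castL dm (Ty.par_lt (by simp [Ty.ord])).symm
  | .arrow a b, .elem w =>
      (TensorProduct.congr (homEquivL dm a b) (LinearEquiv.refl ℂ _)) ≪≫ₗ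
      rTensorHomEquivHomRTensor ℂ ↑(L dm a) ↑(L dm b) ↑(L dm (Ty.elem w)) ≪≫ₗ
      LinearEquiv.arrowCongr (LinearEquiv.refl ℂ _) (parEquiv b (Ty.elem w)) ≪≫ₗ
      (homEquivL dm a (b.par (Ty.elem w))).symm ≪≫ₗ
      castL dm (Ty.par_gt (by simp [Ty.ord])).symm
  | .arrow a b, .arrow c d =>
      if h : (Ty.arrow a b).ord < (Ty.arrow c d).ord then
        (TensorProduct.congr (LinearEquiv.refl ℂ _) (homEquivL dm c d)) ≪≫ₗ
        lTensorHomEquivHomLTensor ℂ ↑(L dm c) ↑(L dm (Ty.arrow a b)) ↑(L dm d) ≪≫ₗ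
        LinearEquiv.arrowCongr (LinearEquiv.refl ℂ _) (parEquiv (Ty.arrow a b) d) ≪≫ₗ
        (homEquivL dm c ((Ty.arrow a b).par d)).symm ≪≫ₗ
        castL dm (Ty.par_lt h).symm
      else if h2 : (Ty.arrow a b).ord = (Ty.arrow c d).ord then
        (TensorProduct.congr (homEquivL dm a b) (homEquivL dm c d)) ≪≫ₗ
        homTensorHomEquiv ℂ ↑(L dm a) ↑(L dm c) ↑(L dm b) ↑(L dm d) ≪≫ₗ
        LinearEquiv.arrowCongr (parEquiv a c) (parEquiv b d) ≪≫ₗ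
        (homEquivL dm (a.par c) (b.par d)).symm ≪≫ₗ
        castL dm (Ty.par_arrow_arrow h2).symm
      else
        (TensorProduct.congr (homEquivL dm a b) (LinearEquiv.refl ℂ _)) ≪≫ₗ
        rTensorHomEquivHomRTensor ℂ ↑(L dm a) ↑(L dm b) ↑(L dm (Ty.arrow c d)) ≪≫ₗ
        LinearEquiv.arrowCongr (LinearEquiv.refl ℂ _) (parEquiv b (Ty.arrow c d)) ≪≫ₗ
        (homEquivL dm a (b.par (Ty.arrow c d))).symm ≪≫ₗ
        castL dm (Ty.par_gt (by omega)).symm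

/-- The parallel product of higher-order maps. -/
noncomputable def parMap {x y : Ty Λ} (M : ↑(L dm x)) (N : ↑(L dm y)) : ↑(L dm (x.par y)) :=
  parEquiv dm x y (M ⊗ₜ[ℂ] N)

/-- The identity map, as an element of `L (z → z)`. -/
noncomputable def idL (z : Ty Λ) : ↑(L dm (Ty.arrow z z)) :=
  ofHom dm (LinearMap.id)

/-- The family of sets of Hermitian / Hs-preserving maps. -/
noncomputable def Hs : (x : Ty Λ) → Set ↑(L dm x)
  | .elem w => {A | (toMat dm A).IsHermitian}
  | .arrow a b => {M | ∀ ρ ∈ Hs a, app dm M ρ ∈ Hs b}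

/-- The family of cones of positive semidefinite / completely K-preserving maps. -/
noncomputable def K : (x : Ty Λ) → Set ↑(L dm x)
  | .elem _ => {A | (toMat dm A).PosSemidef}
  | .arrow a b => {M | ∀ z : Ty Λ, ∀ hz : (Ty.arrow z z).ord = (Ty.arrow a b).ord,
      ∀ ρ ∈ K (a.par z),
        app dm (castL dm (Ty.par_arrow_arrow hz.symm) (parMap dm M (idL dm z))) ρ ∈ K (b.par z)}
  termination_by x => x.ord
  decreasing_by
  all_goals (simp only [Ty.ord_par, Ty.ord] at hz ⊢; omega)

end HigherOrder


/-!
Each space `L x` is identified with a matrix space `Matrix (Idx x) (Idx x) ℂ`, a map of arrow type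
being sent to the Choi matrix of its matrix picture. Under this identification the parallel product
is a reindexed Kronecker product and `f ⊛ id_z` is the ampliation `f ⊗ id`. By induction on the
order, `K x` is then exactly the cone of positive semidefinite matrices, so by Choi's theorem
`M ∈ K (a → b)` iff the Choi matrix of `M` is positive semidefinite. This condition does not mention
an ancilla, hence `M ⊛ id_z` preserves `K` for every `z`, and not only for the `z` of the order
prescribed in the definition of `K (a → b)`. Closure under composition follows, since
`(N ∘ M) ⊛ id_z = (N ⊛ id_z) ∘ (M ⊛ id_z)`.
-/

open scoped Kronecker TensorProduct

namespace Matrix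

section CommSemiring

variable {R : Type*} [CommSemiring R] {p q κ : Type*}

def ampliation (Φ : Matrix p p R →ₗ[R] Matrix q q R) :
    Matrix (p × κ) (p × κ) R →ₗ[R] Matrix (q × κ) (q × κ) R where
  toFun X := of fun ks lt => Φ (of fun i j => X (i, ks.2) (j, lt.2)) ks.1 lt.1
  map_add' X Y := by
    ext ⟨k, s⟩ ⟨l, t⟩
    exact congrFun₂ (map_add Φ _ _) k l
  map_smul' c X := by
    ext ⟨k, s⟩ ⟨l, t⟩
    exact congrFun₂ (map_smul Φ c _) k l

theorem ampliation_apply (Φ : Matrix p p R →ₗ[R] Matrix q q R) (X : Matrix (p × κ) (p × κ) R)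
    (k : q) (s : κ) (l : q) (t : κ) :
    ampliation Φ X (k, s) (l, t) = Φ (of fun i j => X (i, s) (j, t)) k l := rfl

theorem ampliation_kronecker (Φ : Matrix p p R →ₗ[R] Matrix q q R) (A : Matrix p p R)
    (C : Matrix κ κ R) : ampliation Φ (A ⊗ₖ C) = Φ A ⊗ₖ C := by
  ext ⟨k, s⟩ ⟨l, t⟩
  have hblock : (of fun i j => (A ⊗ₖ C) (i, s) (j, t)) = C s t • A := by
    ext; simp [mul_comm]
  rw [ampliation_apply, hblock, map_smul, smul_apply, smul_eq_mul, mul_comm, kroneckerMap_apply]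

variable [Fintype p] [DecidableEq p]

def choiMatrix (Φ : Matrix p p R →ₗ[R] Matrix q q R) : Matrix (p × q) (p × q) R :=
  of fun ik jl => Φ (single ik.1 jl.1 1) ik.2 jl.2

theorem map_apply_eq_sum_choiMatrix (Φ : Matrix p p R →ₗ[R] Matrix q q R) (X : Matrix p p R)
    (k l : q) : Φ X k l = ∑ i, ∑ j, X i j * choiMatrix Φ (i, k) (j, l) := by
  conv_lhs => rw [matrix_eq_sum_single X]
  simp only [map_sum, sum_apply, choiMatrix, of_apply]
  refine Finset.sum_congr rfl fun i _ => Finset.sum_congr rfl fun j _ => ?_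
  rw [show single i j (X i j) = X i j • single i j (1 : R) by
    rw [smul_single, smul_eq_mul, mul_one], map_smul, smul_apply, smul_eq_mul]

variable (R p q) in
def choiEquiv : (Matrix p p R →ₗ[R] Matrix q q R) ≃ₗ[R] Matrix (p × q) (p × q) R where
  toFun := choiMatrix
  map_add' Φ Ψ := by ext; simp [choiMatrix]
  map_smul' c Φ := by ext; simp [choiMatrix]
  invFun C :=
    { toFun X := of fun k l => ∑ i, ∑ j, X i j * C (i, k) (j, l)
      map_add' X Y := by ext; simp [Finset.sum_add_distrib, add_mul]
      map_smul' c X := by ext; simp [Finset.mul_sum, mul_assoc] }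
  left_inv Φ := by ext X k l; exact (map_apply_eq_sum_choiMatrix Φ X k l).symm
  right_inv C := by ext ⟨i, k⟩ ⟨j, l⟩; simp [choiMatrix, single, ite_and]

end CommSemiring

section RCLike

open scoped ComplexOrder

variable {𝕜 : Type*} [RCLike 𝕜] {p q κ : Type*} [Fintype p] [DecidableEq p] [Fintype q]
  [Fintype κ]

open scoped MatrixOrder in
theorem exists_kraus_of_posSemidef_choiMatrix [DecidableEq q] {Φ : Matrix p p 𝕜 →ₗ[𝕜] Matrix q q 𝕜}
    (hΦ : (choiMatrix Φ).PosSemidef) :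
    ∃ K : p × q → Matrix q p 𝕜, ∀ X, Φ X = ∑ r, K r * X * (K r)ᴴ := by
  obtain ⟨B, hB⟩ := CStarAlgebra.nonneg_iff_eq_star_mul_self.mp hΦ.nonneg
  refine ⟨fun r => of fun k i => star (B r (i, k)), fun X => ?_⟩
  ext k l
  rw [map_apply_eq_sum_choiMatrix, hB, sum_apply]
  simp only [mul_apply, star_eq_conjTranspose, conjTranspose_apply, of_apply, star_star,
    Finset.sum_mul, Finset.mul_sum]
  calc _ = ∑ i, ∑ r, ∑ j, X i j * (star (B r (i, k)) * B r (j, l)) :=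
        Finset.sum_congr rfl fun i _ => Finset.sum_comm
    _ = _ := by
      rw [Finset.sum_comm]
      refine Finset.sum_congr rfl fun r _ => ?_
      rw [Finset.sum_comm]
      exact Finset.sum_congr rfl fun j _ => Finset.sum_congr rfl fun i _ => by ring

omit [DecidableEq p] in
theorem ampliation_eq_sum_of_kraus [DecidableEq κ] {Φ : Matrix p p 𝕜 →ₗ[𝕜] Matrix q q 𝕜}
    {K : p × q → Matrix q p 𝕜} (hK : ∀ X, Φ X = ∑ r, K r * X * (K r)ᴴ)
    (X : Matrix (p × κ) (p × κ) 𝕜) :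
    ampliation Φ X = ∑ r, (K r ⊗ₖ (1 : Matrix κ κ 𝕜)) * X * (K r ⊗ₖ (1 : Matrix κ κ 𝕜))ᴴ := by
  ext ⟨k, s⟩ ⟨l, t⟩
  rw [ampliation_apply, hK, sum_apply, sum_apply]
  refine Finset.sum_congr rfl fun r _ => ?_
  simp [mul_apply, Fintype.sum_prod_type, one_apply, kroneckerMap_apply, apply_ite (starRingEnd 𝕜)]

theorem posSemidef_ampliation [DecidableEq q] [DecidableEq κ]
    {Φ : Matrix p p 𝕜 →ₗ[𝕜] Matrix q q 𝕜} (hΦ : (choiMatrix Φ).PosSemidef)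
    {X : Matrix (p × κ) (p × κ) 𝕜} (hX : X.PosSemidef) : (ampliation Φ X).PosSemidef := by
  obtain ⟨K, hK⟩ := exists_kraus_of_posSemidef_choiMatrix hΦ
  rw [ampliation_eq_sum_of_kraus hK]
  exact posSemidef_sum _ fun r _ => hX.mul_mul_conjTranspose_same _

omit [Fintype q] in
theorem posSemidef_choiMatrix_of_ampliation [DecidableEq κ] {Φ : Matrix p p 𝕜 →ₗ[𝕜] Matrix q q 𝕜}
    {f : p → κ} (hf : Function.Injective f)
    (h : ∀ X : Matrix (p × κ) (p × κ) 𝕜, X.PosSemidef → (ampliation Φ X).PosSemidef) :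
    (choiMatrix Φ).PosSemidef := by
  -- the unnormalised maximally entangled vector `∑ i, |i, f i⟩`
  let ω : p × κ → 𝕜 := fun is => if is.2 = f is.1 then 1 else 0
  have hblock : ∀ i j,
      (of fun i' j' => vecMulVec ω (star ω) (i', f i) (j', f j)) = single i j (1 : 𝕜) := by
    intro i j
    ext i' j'
    simp only [ω, of_apply, vecMulVec_apply, Pi.star_apply, single_apply, hf.eq_iff,
      eq_comm (a := i), eq_comm (a := j)]
    split_ifs <;> simp_all
  have hchoi : choiMatrix Φ = (ampliation Φ (vecMulVec ω (star ω))).submatrix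
      (fun ik => (ik.2, f ik.1)) (fun ik => (ik.2, f ik.1)) := by
    ext ⟨i, k⟩ ⟨j, l⟩
    rw [submatrix_apply, ampliation_apply, hblock]
    rfl
  rw [hchoi]
  exact (h _ (posSemidef_vecMulVec_self_star ω)).submatrix _

end RCLike

theorem stdBasis_tensorProduct_equiv_tmul {R l m n o : Type*} [CommSemiring R] [Fintype l]
    [DecidableEq l] [Fintype m] [DecidableEq m] [Fintype n] [DecidableEq n] [Fintype o]
    [DecidableEq o] (A : Matrix l m R) (B : Matrix n o R) :
    ((stdBasis R l m).tensorProduct (stdBasis R n o)).equiv (stdBasis R (l × n) (m × o))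
      (Equiv.prodProdProdComm l m n o) (A ⊗ₜ B) = A ⊗ₖ B := by
  have h : (TensorProduct.mk R _ _).compr₂
      (((stdBasis R l m).tensorProduct (stdBasis R n o)).equiv (stdBasis R (l × n) (m × o))
        (Equiv.prodProdProdComm l m n o)).toLinearMap
      = kroneckerMapBilinear (LinearMap.mul R R) :=
    LinearMap.ext_basis (stdBasis R l m) (stdBasis R n o) fun ⟨i, j⟩ ⟨k, k'⟩ => by
      simp only [LinearMap.compr₂_apply, TensorProduct.mk_apply, LinearEquiv.coe_coe]
      rw [← Module.Basis.tensorProduct_apply, Module.Basis.equiv_apply]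
      simp [stdBasis_eq_single, single_kronecker_single]
  exact LinearMap.congr_fun₂ h A B

end Matrix

namespace HigherOrder

open scoped ComplexOrder
open Matrix

variable {Λ : Type} (dm : Λ → ℕ)

theorem castL_castL {x y z : Ty Λ} (h₁ : x = y) (h₂ : y = z) (v : ↑(L dm x)) :
    castL dm h₂ (castL dm h₁ v) = castL dm (h₁.trans h₂) v := by
  subst h₁ h₂; rfl

theorem castL_rfl {x : Ty Λ} (h : x = x) (v : ↑(L dm x)) : castL dm h v = v := rfl

theorem toHom_parMap_of_lt {x c d : Ty Λ} (h : x.ord < (Ty.arrow c d).ord) (A : ↑(L dm x))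
    (B : ↑(L dm (Ty.arrow c d))) (σ : ↑(L dm c)) :
    toHom dm (castL dm (Ty.par_lt h) (parMap dm A B)) σ = parMap dm A (toHom dm B σ) := by
  rcases x with v | ⟨a, b⟩ <;> [rw [parMap, parEquiv]; rw [parMap, parEquiv, dif_pos h]] <;>
  · simp only [LinearEquiv.trans_apply, castL_castL, castL_rfl, TensorProduct.congr_tmul,
      lTensorHomEquivHomLTensor_apply, LinearEquiv.refl_apply]
    rfl

theorem toHom_parMap_of_gt {a b y : Ty Λ} (h : y.ord < (Ty.arrow a b).ord)
    (A : ↑(L dm (Ty.arrow a b))) (B : ↑(L dm y)) (ρ : ↑(L dm a)) :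
    toHom dm (castL dm (Ty.par_gt h) (parMap dm A B)) ρ = parMap dm (toHom dm A ρ) B := by
  rcases y with w | ⟨c, d⟩ <;>
    [rw [parMap, parEquiv]; rw [parMap, parEquiv, dif_neg (by omega), dif_neg (by omega)]] <;>
  · simp only [LinearEquiv.trans_apply, castL_castL, castL_rfl, TensorProduct.congr_tmul,
      rTensorHomEquivHomRTensor_apply, LinearEquiv.refl_apply]
    rfl

theorem toHom_parMap_of_eq {a b c d : Ty Λ} (h : (Ty.arrow a b).ord = (Ty.arrow c d).ord)
    (M : ↑(L dm (Ty.arrow a b))) (N : ↑(L dm (Ty.arrow c d))) (ρ : ↑(L dm a)) (σ : ↑(L dm c)) :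
    toHom dm (castL dm (Ty.par_arrow_arrow h) (parMap dm M N)) (parMap dm ρ σ)
      = parMap dm (toHom dm M ρ) (toHom dm N σ) := by
  rw [parMap, parEquiv, dif_neg (by omega), dif_pos h]
  simp only [LinearEquiv.trans_apply, castL_castL, castL_rfl, TensorProduct.congr_tmul,
    homTensorHomEquiv_apply, parMap]
  show LinearEquiv.arrowCongr (parEquiv dm a c) (parEquiv dm b d)
    (TensorProduct.map (toHom dm M) (toHom dm N)) (parEquiv dm a c (ρ ⊗ₜ σ)) = _
  rw [LinearEquiv.arrowCongr_apply, LinearEquiv.symm_apply_apply, TensorProduct.map_tmul]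

/-- Reducible, so that `Idx (a → b)` is seen as a product by `simp`. -/
abbrev Idx : Ty Λ → Type
  | .elem w => Fin (dimw dm w)
  | .arrow a b => Idx a × Idx b

instance instFintypeIdx : (x : Ty Λ) → Fintype (Idx dm x)
  | .elem _ => inferInstanceAs (Fintype (Fin _))
  | .arrow a b => @instFintypeProd _ _ (instFintypeIdx a) (instFintypeIdx b)

instance instDecidableEqIdx : (x : Ty Λ) → DecidableEq (Idx dm x)
  | .elem _ => inferInstanceAs (DecidableEq (Fin _))
  | .arrow a b => @instDecidableEqProd _ _ (instDecidableEqIdx a) (instDecidableEqIdx b)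

noncomputable def matrixEquiv : (x : Ty Λ) → ↑(L dm x) ≃ₗ[ℂ] Matrix (Idx dm x) (Idx dm x) ℂ
  | .elem w => matEquivL dm w
  | .arrow a b =>
    homEquivL dm a b ≪≫ₗ LinearEquiv.arrowCongr (matrixEquiv a) (matrixEquiv b) ≪≫ₗ
      choiEquiv ℂ _ _

noncomputable def matrixMap {x y : Ty Λ} (f : ↑(L dm x) →ₗ[ℂ] ↑(L dm y)) :
    Matrix (Idx dm x) (Idx dm x) ℂ →ₗ[ℂ] Matrix (Idx dm y) (Idx dm y) ℂ :=
  LinearEquiv.arrowCongr (matrixEquiv dm x) (matrixEquiv dm y) f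

theorem matrixMap_apply {x y : Ty Λ} (f : ↑(L dm x) →ₗ[ℂ] ↑(L dm y)) (ρ : ↑(L dm x)) :
    matrixMap dm f (matrixEquiv dm x ρ) = matrixEquiv dm y (f ρ) := by
  rw [matrixMap, LinearEquiv.arrowCongr_apply, LinearEquiv.symm_apply_apply]

theorem matrixEquiv_arrow {a b : Ty Λ} (M : ↑(L dm (Ty.arrow a b))) :
    matrixEquiv dm (Ty.arrow a b) M = choiMatrix (matrixMap dm (toHom dm M)) := rfl

theorem matrixEquiv_arrow_apply {a b : Ty Λ} (M : ↑(L dm (Ty.arrow a b))) (i j : Idx dm a)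
    (k l : Idx dm b) :
    matrixEquiv dm (Ty.arrow a b) M (i, k) (j, l)
      = matrixEquiv dm b (toHom dm M ((matrixEquiv dm a).symm (single i j 1))) k l := rfl

/-- The target is an arbitrary `e` with `x ⊛ y = e` because `x ⊛ y` does not reduce
definitionally to its unfolded forms. -/
def ParMapKronecker {x y e : Ty Λ} (h : x.par y = e) (σ : Idx dm x × Idx dm y ≃ Idx dm e) :
    Prop :=
  ∀ (A : ↑(L dm x)) (B : ↑(L dm y)), matrixEquiv dm e (castL dm h (parMap dm A B))
    = (matrixEquiv dm x A ⊗ₖ matrixEquiv dm y B).submatrix σ.symm σ.symm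

theorem ParMapKronecker.exists_rfl {x y e : Ty Λ} {h : x.par y = e}
    {σ : Idx dm x × Idx dm y ≃ Idx dm e} (hσ : ParMapKronecker dm h σ) :
    ∃ τ, ParMapKronecker dm (rfl : x.par y = x.par y) τ := by
  subst h
  exact ⟨σ, hσ⟩

theorem exists_parMapKronecker_elem (v w : List Λ) :
    ∃ σ, ParMapKronecker dm (Ty.par_elem_elem v w) σ := by
  refine ⟨finProdFinEquiv.trans (finCongr (dimw_append dm v w).symm), fun A B => ?_⟩
  rw [parMap, parEquiv]
  simp only [LinearEquiv.trans_apply, castL_castL, castL_rfl, TensorProduct.congr_tmul,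
    stdBasis_tensorProduct_equiv_tmul]
  erw [LinearEquiv.apply_symm_apply]
  ext u u'
  simp only [matEquivL, coe_reindexLinearEquiv, reindex_apply, finCongr_symm, submatrix_apply,
    finCongr_apply, finProdFinEquiv_symm_apply, kroneckerMap_apply, Equiv.symm_trans,
    Equiv.coe_trans, Function.comp_apply]
  rfl

theorem exists_parMapKronecker_of_lt {x c d : Ty Λ} (h : x.ord < (Ty.arrow c d).ord)
    {σ : Idx dm x × Idx dm d ≃ Idx dm (x.par d)} (hσ : ParMapKronecker dm rfl σ) :
    ∃ τ, ParMapKronecker dm (Ty.par_lt h) τ := by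
  refine ⟨⟨fun p => (p.2.1, σ (p.1, p.2.2)), fun q => ((σ.symm q.2).1, q.1, (σ.symm q.2).2),
    fun _ => by simp, fun _ => by simp⟩, fun A B => ?_⟩
  simp only [ParMapKronecker, castL_rfl] at hσ
  ext ⟨i, u⟩ ⟨j, u'⟩
  obtain ⟨⟨k, l⟩, rfl⟩ := σ.surjective u
  obtain ⟨⟨k', l'⟩, rfl⟩ := σ.surjective u'
  rw [matrixEquiv_arrow_apply, toHom_parMap_of_lt dm h, hσ]
  simp only [submatrix_apply, kroneckerMap_apply, Equiv.coe_fn_symm_mk, Equiv.symm_apply_apply]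
  rfl

theorem exists_parMapKronecker_of_gt {a b y : Ty Λ} (h : y.ord < (Ty.arrow a b).ord)
    {σ : Idx dm b × Idx dm y ≃ Idx dm (b.par y)} (hσ : ParMapKronecker dm rfl σ) :
    ∃ τ, ParMapKronecker dm (Ty.par_gt h) τ := by
  refine ⟨(Equiv.prodAssoc _ _ _).trans ((Equiv.refl _).prodCongr σ), fun A B => ?_⟩
  simp only [ParMapKronecker, castL_rfl] at hσ
  ext ⟨i, u⟩ ⟨j, u'⟩
  obtain ⟨⟨k, l⟩, rfl⟩ := σ.surjective u
  obtain ⟨⟨k', l'⟩, rfl⟩ := σ.surjective u'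
  rw [matrixEquiv_arrow_apply, toHom_parMap_of_gt dm h, hσ]
  simp only [submatrix_apply, kroneckerMap_apply, Equiv.symm_trans_apply, Equiv.prodCongr_symm,
    Equiv.prodCongr_apply, Equiv.prodAssoc_symm_apply, Equiv.symm_apply_apply, Prod.map_apply,
    Equiv.refl_symm, Equiv.refl_apply]
  rfl

theorem exists_parMapKronecker_of_eq {a b c d : Ty Λ}
    (h : (Ty.arrow a b).ord = (Ty.arrow c d).ord)
    {σ : Idx dm a × Idx dm c ≃ Idx dm (a.par c)} (hσ : ParMapKronecker dm rfl σ)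
    {τ : Idx dm b × Idx dm d ≃ Idx dm (b.par d)} (hτ : ParMapKronecker dm rfl τ) :
    ∃ υ, ParMapKronecker dm (Ty.par_arrow_arrow h) υ := by
  refine ⟨(Equiv.prodProdProdComm _ _ _ _).trans (σ.prodCongr τ), fun M N => ?_⟩
  simp only [ParMapKronecker, castL_rfl] at hσ hτ
  have hsingle : ∀ i j i' j', (matrixEquiv dm (a.par c)).symm (single (σ (i, i')) (σ (j, j')) 1)
      = parMap dm ((matrixEquiv dm a).symm (single i j 1))
          ((matrixEquiv dm c).symm (single i' j' 1)) := by
    intro i j i' j'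
    rw [LinearEquiv.symm_apply_eq, hσ]
    simp [single_kronecker_single]
  ext ⟨u, w⟩ ⟨u', w'⟩
  obtain ⟨⟨i, i'⟩, rfl⟩ := σ.surjective u
  obtain ⟨⟨j, j'⟩, rfl⟩ := σ.surjective u'
  obtain ⟨⟨k, k'⟩, rfl⟩ := τ.surjective w
  obtain ⟨⟨l, l'⟩, rfl⟩ := τ.surjective w'
  rw [matrixEquiv_arrow_apply, hsingle, toHom_parMap_of_eq dm h, hτ]
  simp only [submatrix_apply, kroneckerMap_apply, Equiv.symm_trans_apply, Equiv.prodCongr_symm,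
    Equiv.prodCongr_apply, Equiv.prodProdProdComm_symm, Equiv.prodProdProdComm_apply,
    Equiv.symm_apply_apply, Prod.map_apply]
  rfl

theorem exists_parMapKronecker (x y : Ty Λ) :
    ∃ σ, ParMapKronecker dm (rfl : x.par y = x.par y) σ := by
  induction x, y using Ty.par.induct with
  | case1 v w =>
    obtain ⟨σ, hσ⟩ := exists_parMapKronecker_elem dm v w
    exact hσ.exists_rfl
  | case2 v c d ih =>
    obtain ⟨σ, hσ⟩ := ih
    obtain ⟨τ, hτ⟩ := exists_parMapKronecker_of_lt dm (by simp [Ty.ord]) hσ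
    exact hτ.exists_rfl
  | case3 a b w ih =>
    obtain ⟨σ, hσ⟩ := ih
    obtain ⟨τ, hτ⟩ := exists_parMapKronecker_of_gt dm (by simp [Ty.ord]) hσ
    exact hτ.exists_rfl
  | case4 a b c d hlt ih =>
    obtain ⟨σ, hσ⟩ := ih
    obtain ⟨τ, hτ⟩ := exists_parMapKronecker_of_lt dm hlt hσ
    exact hτ.exists_rfl
  | case5 a b c d _ heq ihac ihbd =>
    obtain ⟨σ, hσ⟩ := ihac
    obtain ⟨τ, hτ⟩ := ihbd
    obtain ⟨υ, hυ⟩ := exists_parMapKronecker_of_eq dm heq hσ hτ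
    exact hυ.exists_rfl
  | case6 a b c d hnlt hne ih =>
    obtain ⟨σ, hσ⟩ := ih
    obtain ⟨τ, hτ⟩ := exists_parMapKronecker_of_gt dm (a := a) (by omega) hσ
    exact hτ.exists_rfl

noncomputable def parIdxEquiv (x y : Ty Λ) : Idx dm x × Idx dm y ≃ Idx dm (x.par y) :=
  (exists_parMapKronecker dm x y).choose

theorem matrixEquiv_parMap (x y : Ty Λ) (A : ↑(L dm x)) (B : ↑(L dm y)) :
    matrixEquiv dm (x.par y) (parMap dm A B) = (matrixEquiv dm x A ⊗ₖ matrixEquiv dm y B).submatrix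
      (parIdxEquiv dm x y).symm (parIdxEquiv dm x y).symm :=
  (exists_parMapKronecker dm x y).choose_spec A B

/-- `f ⊛ id_z`, for an ancilla `z` of any order. -/
noncomputable def parId {x y : Ty Λ} (f : ↑(L dm x) →ₗ[ℂ] ↑(L dm y)) (z : Ty Λ) :
    ↑(L dm (x.par z)) →ₗ[ℂ] ↑(L dm (y.par z)) :=
  (parEquiv dm y z).toLinearMap ∘ₗ TensorProduct.map f LinearMap.id ∘ₗ
    (parEquiv dm x z).symm.toLinearMap

theorem parId_parMap {x y : Ty Λ} (f : ↑(L dm x) →ₗ[ℂ] ↑(L dm y)) (z : Ty Λ) (A : ↑(L dm x))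
    (C : ↑(L dm z)) : parId dm f z (parMap dm A C) = parMap dm (f A) C := by
  simp [parId, parMap]

theorem parId_comp {x y w : Ty Λ} (g : ↑(L dm y) →ₗ[ℂ] ↑(L dm w)) (f : ↑(L dm x) →ₗ[ℂ] ↑(L dm y))
    (z : Ty Λ) : parId dm (g ∘ₗ f) z = parId dm g z ∘ₗ parId dm f z := by
  ext ρ
  simp [parId, ← LinearMap.comp_apply (TensorProduct.map g _), ← TensorProduct.map_comp]

theorem app_parMap_idL {a b z : Ty Λ} (hz : (Ty.arrow z z).ord = (Ty.arrow a b).ord)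
    (M : ↑(L dm (Ty.arrow a b))) (ρ : ↑(L dm (a.par z))) :
    app dm (castL dm (Ty.par_arrow_arrow hz.symm) (parMap dm M (idL dm z))) ρ
      = parId dm (toHom dm M) z ρ := by
  rw [parMap, parEquiv, dif_neg (by omega), dif_pos hz.symm]
  simp only [LinearEquiv.trans_apply, TensorProduct.congr_tmul, homTensorHomEquiv_apply,
    castL_castL, castL_rfl, app]
  rfl

theorem mem_K_arrow_iff {a b : Ty Λ} (M : ↑(L dm (Ty.arrow a b))) :
    M ∈ K dm (Ty.arrow a b) ↔ ∀ z : Ty Λ, (Ty.arrow z z).ord = (Ty.arrow a b).ord →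
      Set.MapsTo (parId dm (toHom dm M) z) (K dm (a.par z)) (K dm (b.par z)) := by
  rw [K]
  exact forall_congr' fun z => forall_congr' fun hz =>
    forall₂_congr fun ρ _ => by rw [app_parMap_idL dm hz]

theorem matrixEquiv_parId {x y : Ty Λ} (f : ↑(L dm x) →ₗ[ℂ] ↑(L dm y)) (z : Ty Λ)
    (ρ : ↑(L dm (x.par z))) :
    matrixEquiv dm (y.par z) (parId dm f z ρ)
      = (ampliation (matrixMap dm f) ((matrixEquiv dm (x.par z) ρ).submatrix
          (parIdxEquiv dm x z) (parIdxEquiv dm x z))).submatrix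
        (parIdxEquiv dm y z).symm (parIdxEquiv dm y z).symm := by
  obtain ⟨t, rfl⟩ := (parEquiv dm x z).surjective ρ
  induction t using TensorProduct.induction_on with
  | zero => simp
  | tmul A C =>
    rw [show parEquiv dm x z (A ⊗ₜ C) = parMap dm A C from rfl, parId_parMap, matrixEquiv_parMap,
      matrixEquiv_parMap, submatrix_submatrix, Equiv.symm_comp_self, submatrix_id_id,
      ampliation_kronecker, matrixMap_apply]
  | add s t hs ht => simp only [map_add, submatrix_add, Pi.add_apply, hs, ht]

theorem mapsTo_parId_K_iff {x y z : Ty Λ} (f : ↑(L dm x) →ₗ[ℂ] ↑(L dm y))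
    (hx : ∀ ρ : ↑(L dm (x.par z)), ρ ∈ K dm (x.par z) ↔ (matrixEquiv dm _ ρ).PosSemidef)
    (hy : ∀ ρ : ↑(L dm (y.par z)), ρ ∈ K dm (y.par z) ↔ (matrixEquiv dm _ ρ).PosSemidef) :
    Set.MapsTo (parId dm f z) (K dm (x.par z)) (K dm (y.par z)) ↔
      ∀ X : Matrix (Idx dm x × Idx dm z) (Idx dm x × Idx dm z) ℂ, X.PosSemidef →
        (ampliation (matrixMap dm f) X).PosSemidef := by
  set σ := parIdxEquiv dm x z
  constructor
  · intro hf X hX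
    have hρ : (matrixEquiv dm _).symm (X.submatrix σ.symm σ.symm) ∈ K dm (x.par z) := by
      rw [hx, LinearEquiv.apply_symm_apply]
      exact hX.submatrix _
    have := (hy _).1 (hf hρ)
    rwa [matrixEquiv_parId, posSemidef_submatrix_equiv, LinearEquiv.apply_symm_apply,
      submatrix_submatrix, Equiv.symm_comp_self, submatrix_id_id] at this
  · intro hf ρ hρ
    rw [hy, matrixEquiv_parId, posSemidef_submatrix_equiv]
    exact hf _ (((hx ρ).1 hρ).submatrix _)

def unitTy : ℕ → Ty Λ
  | 0 => .elem []
  | k + 1 => .arrow (unitTy k) (unitTy k)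

theorem ord_unitTy (k : ℕ) : (unitTy (Λ := Λ) k).ord = k := by
  induction k with
  | zero => rfl
  | succ k ih => simp [unitTy, Ty.ord, ih]; omega

def unitIdx : (k : ℕ) → Idx dm (unitTy k)
  | 0 => ⟨0, Nat.one_pos⟩
  | k + 1 => (unitIdx k, unitIdx k)

theorem mem_K_iff_posSemidef (x : Ty Λ) (A : ↑(L dm x)) :
    A ∈ K dm x ↔ (matrixEquiv dm x A).PosSemidef := by
  induction hn : x.ord using Nat.strong_induction_on generalizing x with
  | _ n ih =>
    cases x with
    | elem _ => rw [K]; rfl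
    | arrow a b =>
      have hlt : ∀ z, (Ty.arrow z z).ord = (Ty.arrow a b).ord →
          (a.par z).ord < n ∧ (b.par z).ord < n := by
        intro z hz
        simp only [Ty.ord, Ty.ord_par] at hz hn ⊢
        omega
      have hmaps : ∀ z, (Ty.arrow z z).ord = (Ty.arrow a b).ord →
          (Set.MapsTo (parId dm (toHom dm A) z) (K dm (a.par z)) (K dm (b.par z)) ↔
            ∀ X, X.PosSemidef → (ampliation (matrixMap dm (toHom dm A)) X).PosSemidef) :=
        fun z hz => mapsTo_parId_K_iff dm _ (fun ρ => ih _ (hlt z hz).1 _ ρ rfl)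
          (fun ρ => ih _ (hlt z hz).2 _ ρ rfl)
      rw [mem_K_arrow_iff, matrixEquiv_arrow]
      constructor
      · intro hA
        -- an ancilla of the admissible order into which `Idx a` embeds
        set m := max a.ord b.ord
        have hz : (Ty.arrow (a.par (unitTy m)) (a.par (unitTy m))).ord = (Ty.arrow a b).ord := by
          simp only [Ty.ord, Ty.ord_par, ord_unitTy]
          omega
        refine posSemidef_choiMatrix_of_ampliation
          (f := fun i => parIdxEquiv dm a (unitTy m) (i, unitIdx dm m))
          (fun i j hij => ?_) ((hmaps _ hz).1 (hA _ hz))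
        exact congrArg Prod.fst ((parIdxEquiv dm a _).injective hij)
      · exact fun hC z hz => (hmaps z hz).2 fun X hX => posSemidef_ampliation hC hX

theorem mapsTo_parId_of_mem_K {a b : Ty Λ} {M : ↑(L dm (Ty.arrow a b))}
    (hM : M ∈ K dm (Ty.arrow a b)) (z : Ty Λ) :
    Set.MapsTo (parId dm (toHom dm M) z) (K dm (a.par z)) (K dm (b.par z)) := by
  rw [mem_K_iff_posSemidef, matrixEquiv_arrow] at hM
  exact (mapsTo_parId_K_iff dm _ (mem_K_iff_posSemidef dm _) (mem_K_iff_posSemidef dm _)).2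
    fun X hX => posSemidef_ampliation hM hX

end HigherOrder

open HigherOrder in
/-- Completely K-preserving maps are closed under composition. -/
theorem K_comp {Λ : Type} (dm : Λ → ℕ) (a b c : Ty Λ)
    (M : ↑(L dm (Ty.arrow a b))) (N : ↑(L dm (Ty.arrow b c)))
    (hM : M ∈ K dm (Ty.arrow a b)) (hN : N ∈ K dm (Ty.arrow b c)) :
    ofHom dm ((toHom dm N).comp (toHom dm M)) ∈ K dm (Ty.arrow a c) := by
  rw [mem_K_arrow_iff]
  intro z _
  rw [show toHom dm (ofHom dm ((toHom dm N).comp (toHom dm M))) = toHom dm N ∘ₗ toHom dm M from rfl,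
    parId_comp, LinearMap.coe_comp]
  exact (mapsTo_parId_of_mem_K dm hN z).comp (mapsTo_parId_of_mem_K dm hM z)
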